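/- arXiv:2102.07128 — 7 statements merged into one kernel-verified Lean document; each statement's English description precedes it below -/
import Mathlib

section
/- Let σ ∈ (0,1) and 0 ≤ r ≤ t, and let v_σ(t) = e^{−t}/((1−σ) + σe^{−t}). Then σ ∫₀^{t−r} e^{−s} v_σ(t−s)² ds = e^{−t} σ (e^{−r} − e^{−t}) / ( (1 − σ(1−e^{−t})) (1 − σ(1−e^{−r})) ), and consequently ( σ ∫₀^{t−r} e^{−s} v_σ(t−s)² ds ) / v_σ(t) = σ (e^{−r} − e^{−t}) / (1 − σ(1−e^{−r})). -/
open Real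

noncomputable def partitionFunction (σ t : ℝ) : ℝ := exp (-t) / (1 - σ + σ * exp (-t))

lemma one_sub_add_mul_exp_pos {σ : ℝ} (h0 : 0 ≤ σ) (h1 : σ ≤ 1) (x : ℝ) :
    0 < 1 - σ + σ * exp x := by
  rcases h1.lt_or_eq with h1 | rfl
  · have := mul_nonneg h0 (exp_pos x).le
    linarith
  · simpa using exp_pos x

lemma continuous_partitionFunction {σ : ℝ} (h0 : 0 ≤ σ) (h1 : σ ≤ 1) :
    Continuous (partitionFunction σ) := by
  unfold partitionFunction
  exact Continuous.div (by fun_prop) (by fun_prop)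
    fun x => (one_sub_add_mul_exp_pos h0 h1 (-x)).ne'

/-- The antiderivative comes from `e^{-s} v_σ(t-s)² = e^{-t} e^{s-t} / D(s-t)²`
with `D(x) = 1 - σ + σ e^x`, whose derivative is `σ e^x`. -/
lemma hasDerivAt_inv_one_sub_add_mul_exp {σ : ℝ} (h0 : 0 < σ) (h1 : σ ≤ 1) (t s : ℝ) :
    HasDerivAt (fun u => -exp (-t) / σ * (1 - σ + σ * exp (u - t))⁻¹)
      (exp (-s) * partitionFunction σ (t - s) ^ 2) s := by
  have hD := (one_sub_add_mul_exp_pos h0.le h1 (s - t)).ne'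
  have hderivD : HasDerivAt (fun u => 1 - σ + σ * exp (u - t)) (σ * exp (s - t)) s := by
    simpa using ((((hasDerivAt_id s).sub_const t).exp).const_mul σ).const_add (1 - σ)
  refine ((hderivD.inv hD).const_mul (-exp (-t) / σ)).congr_deriv ?_
  have hexp : exp (-s) * exp (s - t) = exp (-t) := by rw [← exp_add]; ring_nf
  unfold partitionFunction
  rw [neg_sub, ← hexp]
  field_simp

lemma integral_exp_mul_partitionFunction_sq {σ : ℝ} (h0 : 0 < σ) (h1 : σ ≤ 1) (t a b : ℝ) :
    σ * ∫ s in a..b, exp (-s) * partitionFunction σ (t - s) ^ 2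
      = exp (-t) * ((1 - σ + σ * exp (a - t))⁻¹ - (1 - σ + σ * exp (b - t))⁻¹) := by
  rw [intervalIntegral.integral_eq_sub_of_hasDerivAt
    (fun s _ => hasDerivAt_inv_one_sub_add_mul_exp h0 h1 t s)
    (by
      apply Continuous.intervalIntegrable
      have := continuous_partitionFunction h0.le h1
      fun_prop)]
  field_simp
  ring

theorem stmt5_general (σ r t : ℝ) (hσ : σ ∈ Set.Ioo (0 : ℝ) 1)
    (v : ℝ → ℝ) (hv : ∀ s, v s = Real.exp (-s) / ((1 - σ) + σ * Real.exp (-s))) :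
    σ * ∫ s in (0 : ℝ)..(t - r), Real.exp (-s) * (v (t - s)) ^ 2
      = Real.exp (-t) * σ * (Real.exp (-r) - Real.exp (-t)) /
        ((1 - σ * (1 - Real.exp (-t))) * (1 - σ * (1 - Real.exp (-r)))) ∧
    (σ * ∫ s in (0 : ℝ)..(t - r), Real.exp (-s) * (v (t - s)) ^ 2) / v t
      = σ * (Real.exp (-r) - Real.exp (-t)) / (1 - σ * (1 - Real.exp (-r))) := by
  obtain ⟨hσ0, hσ1⟩ := hσ
  obtain rfl : v = partitionFunction σ := funext hv
  have hD : ∀ x, 1 - σ * (1 - exp (-x)) = 1 - σ + σ * exp (-x) := fun x => by ring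
  have hDt := (one_sub_add_mul_exp_pos hσ0.le hσ1.le (-t)).ne'
  have hDr := (one_sub_add_mul_exp_pos hσ0.le hσ1.le (-r)).ne'
  have hmass : σ * ∫ s in (0 : ℝ)..(t - r), exp (-s) * partitionFunction σ (t - s) ^ 2
      = exp (-t) * σ * (exp (-r) - exp (-t)) /
        ((1 - σ * (1 - exp (-t))) * (1 - σ * (1 - exp (-r)))) := by
    rw [integral_exp_mul_partitionFunction_sq hσ0 hσ1.le, zero_sub, sub_sub_cancel_left, hD, hD]
    field_simp
    ring
  refine ⟨hmass, ?_⟩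
  rw [hmass, partitionFunction, hD, hD]
  field_simp

/-- Theorem 2.3 (computational core): with `v_σ(t) = e^{-t}/((1-σ) + σe^{-t})`,
`σ ∫₀^{t-r} e^{-s} v_σ(t-s)² ds` equals the displayed expression, and the quotient by
`v_σ(t)` is the probability of the first branching time being at most `t - r`. -/
theorem stmt5 (σ r t : ℝ) (hσ : σ ∈ Set.Ioo (0 : ℝ) 1) (hr : 0 ≤ r) (hrt : r ≤ t)
    (v : ℝ → ℝ) (hv : ∀ s, v s = Real.exp (-s) / ((1 - σ) + σ * Real.exp (-s))) :
    σ * ∫ s in (0 : ℝ)..(t - r), Real.exp (-s) * (v (t - s)) ^ 2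
      = Real.exp (-t) * σ * (Real.exp (-r) - Real.exp (-t)) /
        ((1 - σ * (1 - Real.exp (-t))) * (1 - σ * (1 - Real.exp (-r)))) ∧
    (σ * ∫ s in (0 : ℝ)..(t - r), Real.exp (-s) * (v (t - s)) ^ 2) / v t
      = σ * (Real.exp (-r) - Real.exp (-t)) / (1 - σ * (1 - Real.exp (-r))) :=
  stmt5_general σ r t hσ v hv
end

section
/- Let ε > 0 and let λ : (0,∞) → (0,∞) satisfy lim_{t→∞} λ(t) = 0 and lim_{t→∞} (t + ln(λ(t)ε²)) = ∞. Set σ_t := 1/cosh(ε√(2λ(t))) and p(t) := 1 − σ_t(1 − e^{−t}). Then for every θ > 0, lim_{t→∞} p(t) / ( e^{θλ(t)ε²} − σ_t(1 − e^{−t}) ) = 1/(1+θ). Equivalently, if N_t is geometric on {1,2,...} with parameter p(t), then λ(t)ε² N_t converges in distribution to a standard exponential random variable. -/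
/-!
Write `a = λ(t)ε²` and `x = ε√(2λ(t))`, so that `x²/2 = a`. Since `1 - sech x ~ x²/2`, we get
`1 - σ_t ~ a`, and `e^{-t}/a = exp(-(t + ln a)) → 0`; hence `p(t) = (1 - σ_t) + σ_t e^{-t} ~ a`.
The quotient is the Laplace transform `p / (e^{θa} - (1 - p))` of a geometric variable, which
equals `1 / ((e^{θa} - 1)/p + 1)` and tends to `1/(θ + 1)` because `(e^{θa} - 1)/a → θ`.
-/

open Filter Real Topology

lemma tendsto_exp_mul_sub_one_div (θ : ℝ) :
    Tendsto (fun s => (exp (θ * s) - 1) / s) (𝓝[≠] 0) (𝓝 θ) := by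
  have h : HasDerivAt (fun s => exp (θ * s)) θ 0 := by
    simpa using ((hasDerivAt_id (0 : ℝ)).const_mul θ).exp
  simpa [div_eq_inv_mul] using h.tendsto_slope_zero

lemma tendsto_sinh_div_self : Tendsto (fun x => sinh x / x) (𝓝[≠] 0) (𝓝 1) := by
  simpa [div_eq_inv_mul] using (hasDerivAt_sinh 0).tendsto_slope_zero

lemma one_sub_inv_cosh_div_sq_half {x : ℝ} (hx : x ≠ 0) :
    (1 - (cosh x)⁻¹) / (x ^ 2 / 2) = (sinh x / x) ^ 2 * (2 / ((cosh x + 1) * cosh x)) := by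
  have hc : 0 < cosh x := cosh_pos x
  field_simp
  rw [sinh_sq]
  ring

lemma tendsto_one_sub_inv_cosh_div_sq_half :
    Tendsto (fun x => (1 - (cosh x)⁻¹) / (x ^ 2 / 2)) (𝓝[≠] 0) (𝓝 1) := by
  have hcosh : Tendsto cosh (𝓝[≠] 0) (𝓝 1) :=
    (continuous_cosh.tendsto' 0 1 cosh_zero).mono_left nhdsWithin_le_nhds
  have h := (tendsto_sinh_div_self.pow 2).mul
    (tendsto_const_nhds (x := (2 : ℝ)).div ((hcosh.add_const 1).mul hcosh) (by norm_num))
  norm_num at h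
  refine h.congr' ?_
  filter_upwards [self_mem_nhdsWithin] with x hx
  exact (one_sub_inv_cosh_div_sq_half hx).symm

/-- The Laplace transform `E[exp (-s N)]` of a random variable `N` that is geometric on
`{1, 2, ...}` with success probability `p`. -/
noncomputable def geometricLaplace (p s : ℝ) : ℝ := p / (exp s - (1 - p))

lemma tendsto_geometricLaplace {α : Type*} {l : Filter α} {a p : α → ℝ} {θ : ℝ}
    (hθ : 1 + θ ≠ 0) (ha : Tendsto a l (𝓝[≠] 0)) (hpa : Tendsto (fun t => p t / a t) l (𝓝 1)) :
    Tendsto (fun t => geometricLaplace (p t) (θ * a t)) l (𝓝 (1 / (1 + θ))) := by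
  have hp : ∀ᶠ t in l, p t ≠ 0 :=
    (hpa.eventually_ne one_ne_zero).mono fun t h hp => h (by simp [hp])
  have hq := ((((tendsto_exp_mul_sub_one_div θ).comp ha).mul (hpa.inv₀ one_ne_zero)).add_const
    1).inv₀ (by simpa [add_comm] using hθ)
  simp only [inv_one, mul_one, add_comm θ] at hq
  rw [← one_div] at hq
  refine hq.congr' ?_
  filter_upwards [hp, ha.eventually self_mem_nhdsWithin] with t hpt (hat : a t ≠ 0)
  simp only [Function.comp, geometricLaplace]
  field_simp
  ring

lemma tendsto_one_sub_mul_one_sub_exp_neg_div {a σ : ℝ → ℝ} (ha : ∀ᶠ t in atTop, 0 < a t)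
    (hlog : Tendsto (fun t => t + log (a t)) atTop atTop)
    (hσ : Tendsto (fun t => (1 - σ t) / a t) atTop (𝓝 1)) (hσ1 : Tendsto σ atTop (𝓝 1)) :
    Tendsto (fun t => (1 - σ t * (1 - exp (-t))) / a t) atTop (𝓝 1) := by
  have hexp : Tendsto (fun t => exp (-t) / a t) atTop (𝓝 0) := by
    refine (tendsto_exp_atBot.comp (tendsto_neg_atBot_iff.mpr hlog)).congr' ?_
    filter_upwards [ha] with t hat
    simp [exp_add, exp_neg, exp_log hat, div_eq_mul_inv, mul_comm]
  have h := hσ.add (hσ1.mul hexp)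
  rw [mul_zero, add_zero] at h
  refine h.congr' ?_
  filter_upwards [ha] with t hat
  field_simp
  ring

/-- Theorem 5.2(i): the Laplace transform `E[e^{-θ λ(t)ε² n(t)}]` of the geometric
particle number converges to `1/(1+θ)`, i.e. `λ(t)ε² n(t)` converges to a standard
exponential random variable. -/
theorem stmt7 (ε : ℝ) (hε : 0 < ε) (lam : ℝ → ℝ) (hpos : ∀ t > (0 : ℝ), 0 < lam t)
    (h0 : Filter.Tendsto lam Filter.atTop (nhds 0))
    (h1 : Filter.Tendsto (fun t => t + Real.log (lam t * ε ^ 2)) Filter.atTop Filter.atTop)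
    (σ : ℝ → ℝ) (hσ : ∀ t, σ t = 1 / Real.cosh (ε * Real.sqrt (2 * lam t)))
    (p : ℝ → ℝ) (hp : ∀ t, p t = 1 - σ t * (1 - Real.exp (-t)))
    (θ : ℝ) (hθ : 0 < θ) :
    Filter.Tendsto
      (fun t => p t / (Real.exp (θ * (lam t * ε ^ 2)) - σ t * (1 - Real.exp (-t))))
      Filter.atTop (nhds (1 / (1 + θ))) := by
  have hlam : ∀ᶠ t in atTop, 0 < lam t := (eventually_gt_atTop 0).mono hpos
  have ha_pos : ∀ᶠ t in atTop, 0 < lam t * ε ^ 2 := hlam.mono fun t ht => by positivity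
  have ha : Tendsto (fun t => lam t * ε ^ 2) atTop (𝓝[≠] 0) :=
    tendsto_nhdsWithin_of_tendsto_nhds_of_eventually_within _
      (by simpa using h0.mul_const (ε ^ 2)) (ha_pos.mono fun t ht => ht.ne')
  have hx : Tendsto (fun t => ε * √(2 * lam t)) atTop (𝓝[≠] 0) :=
    tendsto_nhdsWithin_of_tendsto_nhds_of_eventually_within _
      (by simpa only [mul_zero, sqrt_zero] using ((h0.const_mul 2).sqrt).const_mul ε)
      (hlam.mono fun t ht => (by positivity : 0 < ε * √(2 * lam t)).ne')
  have hσa : Tendsto (fun t => (1 - σ t) / (lam t * ε ^ 2)) atTop (𝓝 1) := by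
    refine (tendsto_one_sub_inv_cosh_div_sq_half.comp hx).congr' ?_
    filter_upwards [hlam] with t ht
    rw [Function.comp_apply, hσ, one_div, mul_pow, sq_sqrt (by positivity)]
    ring_nf
  have hσ1 : Tendsto σ atTop (𝓝 1) := by
    have hσ' : σ = fun t => (cosh (ε * √(2 * lam t)))⁻¹ :=
      funext fun t => (hσ t).trans (one_div _)
    rw [hσ']
    simpa using ((continuous_cosh.tendsto 0).comp (tendsto_nhds_of_tendsto_nhdsWithin hx)).inv₀
      (by simp)
  have hpa : Tendsto (fun t => p t / (lam t * ε ^ 2)) atTop (𝓝 1) := by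
    simpa only [hp] using tendsto_one_sub_mul_one_sub_exp_neg_div ha_pos h1 hσa hσ1
  refine (tendsto_geometricLaplace (by positivity) ha hpa).congr fun t => ?_
  rw [geometricLaplace, hp, sub_sub_cancel]
end

section
/- Let ε > 0 and let λ : (0,∞) → (0,∞) satisfy lim_{t→∞} λ(t) = 0 and lim_{t→∞} (t + ln(λ(t)ε²)) = ∞. Fix ρ ∈ ℝ, set σ_t := 1/cosh(ε√(2λ(t))), s(t) := t + ln(λ(t)ε²) + ρ, and q := 1/(1 + e^ρ). Then for every γ ∈ ℝ with e^γ(1−q) < 1, lim_{t→∞} (1 − σ_t(1−e^{−t})) / ( e^{−γ}(1 − σ_t(1 − e^{−t+s(t)})) − σ_t(e^{s(t)−t} − e^{−t}) ) = q/(e^{−γ} − (1−q)) = Σ_{n=1}^∞ e^{γn} q(1−q)^{n−1}. -/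
/-!
Write `u = λ(t)ε²`, so that `σ_t = sech √(2u)` and `e^{s(t)-t} = u e^ρ`. Squeezing
`1 + u ≤ cosh √(2u) ≤ e^u` gives `1 - σ_t ~ u`, while `e^{-t} = u e^{-(t + ln u)} = o(u)`.
Dividing numerator and denominator by `u`, the quotient tends to `1 / (e^{-γ}(1 + e^ρ) - e^ρ)`,
which is `q / (e^{-γ} - (1 - q))`, the moment generating function of the geometric law.
-/

open Filter Real Topology

namespace Real

lemma one_add_sq_div_two_le_cosh (x : ℝ) : 1 + x ^ 2 / 2 ≤ cosh x := by
  have h := sum_le_hasSum (Finset.range 2)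
    (fun n _ => div_nonneg ((even_two_mul n).pow_nonneg x) (Nat.cast_nonneg _)) (hasSum_cosh x)
  simpa [Finset.sum_range_succ] using h

lemma tendsto_exp_sub_one_div : Tendsto (fun u => (exp u - 1) / u) (𝓝[≠] 0) (𝓝 1) := by
  have h := hasDerivAt_exp 0
  rw [hasDerivAt_iff_tendsto_slope, exp_zero] at h
  refine h.congr fun u => ?_
  simp [slope_def_field]

lemma tendsto_cosh_sqrt_two_mul_sub_one_div :
    Tendsto (fun u => (cosh √(2 * u) - 1) / u) (𝓝[>] 0) (𝓝 1) := by
  refine tendsto_of_tendsto_of_tendsto_of_le_of_le' tendsto_const_nhds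
    (tendsto_exp_sub_one_div.mono_left (nhdsGT_le_nhdsNE 0)) ?_ ?_ <;>
  filter_upwards [self_mem_nhdsWithin] with u (hu : 0 < u) <;>
  have hsq : √(2 * u) ^ 2 / 2 = u := by rw [sq_sqrt (by positivity)]; ring
  · rw [le_div_iff₀ hu]
    linarith [one_add_sq_div_two_le_cosh √(2 * u)]
  · gcongr
    have h := cosh_le_exp_half_sq √(2 * u)
    rwa [hsq] at h

lemma tendsto_one_sub_inv_cosh_sqrt_two_mul_div :
    Tendsto (fun u => (1 - 1 / cosh √(2 * u)) / u) (𝓝[>] 0) (𝓝 1) := by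
  have hcosh : Tendsto (fun u => cosh √(2 * u)) (𝓝[>] 0) (𝓝 1) :=
    ((by fun_prop : Continuous fun u => cosh √(2 * u)).tendsto' 0 1 (by simp)).mono_left
      nhdsWithin_le_nhds
  have h := tendsto_cosh_sqrt_two_mul_sub_one_div.div hcosh one_ne_zero
  rw [div_one] at h
  refine h.congr fun u => ?_
  rw [Pi.div_apply]
  field_simp [(cosh_pos _).ne']

end Real

lemma tendsto_one_sub_inv_cosh_mul_sqrt_two_mul_div {α : Type*} {l : Filter α} {lam : α → ℝ}
    {ε : ℝ} (hε : 0 < ε) (h0 : Tendsto lam l (𝓝 0)) (hpos : ∀ᶠ x in l, 0 < lam x) :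
    Tendsto (fun x => (1 - 1 / cosh (ε * √(2 * lam x))) / (lam x * ε ^ 2)) l (𝓝 1) := by
  have hu : Tendsto (fun x => lam x * ε ^ 2) l (𝓝[>] 0) :=
    tendsto_nhdsWithin_iff.2 ⟨by simpa using h0.mul_const (ε ^ 2),
      hpos.mono fun x hx => mul_pos hx (by positivity)⟩
  refine (tendsto_one_sub_inv_cosh_sqrt_two_mul_div.comp hu).congr fun x => ?_
  rw [Function.comp_apply, ← mul_assoc, sqrt_mul' _ (sq_nonneg ε), sqrt_sq hε.le, mul_comm ε]

lemma tendsto_exp_neg_div_of_tendsto_add_log {u : ℝ → ℝ} (hu : ∀ᶠ t in atTop, 0 < u t)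
    (h : Tendsto (fun t => t + log (u t)) atTop atTop) :
    Tendsto (fun t => exp (-t) / u t) atTop (𝓝 0) := by
  refine (tendsto_exp_neg_atTop_nhds_zero.comp h).congr' ?_
  filter_upwards [hu] with t ht
  rw [Function.comp_apply, neg_add, exp_add, exp_neg (log _), exp_log ht, div_eq_mul_inv]

lemma tendsto_quotient_of_one_sub_div_tendsto_one {α : Type*} {l : Filter α} {σ u w : α → ℝ}
    {a c : ℝ} (hu : Tendsto u l (𝓝 0)) (hu_ne : ∀ᶠ x in l, u x ≠ 0)
    (hσ : Tendsto (fun x => (1 - σ x) / u x) l (𝓝 1)) (hw : Tendsto (fun x => w x / u x) l (𝓝 0))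
    (hne : a * (1 + c) - c ≠ 0) :
    Tendsto (fun x => (1 - σ x * (1 - w x)) /
        (a * (1 - σ x * (1 - u x * c)) - σ x * (u x * c - w x)))
      l (𝓝 (1 / (a * (1 + c) - c))) := by
  have hσ₁ : Tendsto σ l (𝓝 1) := by
    have h := tendsto_const_nhds (x := (1 : ℝ)) |>.sub (hu.mul hσ)
    rw [zero_mul, sub_zero] at h
    refine h.congr' ?_
    filter_upwards [hu_ne] with x hx
    field_simp
    ring
  have hlim := (hσ.add (hσ₁.mul hw)).div
    ((hσ.add (hσ₁.mul_const c)).const_mul a |>.sub (hσ₁.mul (tendsto_const_nhds.sub hw))) (by simpa)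
  simp only [one_mul, mul_zero, add_zero, sub_zero] at hlim
  refine hlim.congr' ?_
  filter_upwards [hu_ne] with x hx
  rw [Pi.div_apply, ← mul_div_mul_left _ _ hx]
  congr 1 <;> field_simp <;> ring

lemma lt_exp_neg_of_exp_mul_lt_one {x γ : ℝ} (h : exp γ * x < 1) : x < exp (-γ) := by
  rwa [exp_neg, inv_eq_one_div, lt_div_iff₀ (exp_pos γ), mul_comm]

lemma tsum_exp_mul_succ_mul_geometric {q γ : ℝ} (hq : q ≤ 1) (hγ : exp γ * (1 - q) < 1) :
    ∑' n : ℕ, exp (γ * (n + 1)) * q * (1 - q) ^ n = q / (exp (-γ) - (1 - q)) := by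
  have hterm (n : ℕ) :
      exp (γ * (n + 1)) * q * (1 - q) ^ n = exp γ * q * (exp γ * (1 - q)) ^ n := by
    rw [mul_pow, ← exp_nat_mul, show γ * (n + 1) = γ + n * γ by ring, exp_add]
    ring
  rw [tsum_congr hterm, tsum_mul_left,
    tsum_geometric_of_lt_one (mul_nonneg (exp_pos γ).le (by linarith)) hγ, exp_neg]
  have hgap : 0 < 1 - exp γ * (1 - q) := by linarith
  field_simp

/-- Theorem 5.2(ii): the moment generating function of the number of particles at time
`s(t) = t + ln(λ(t)ε²) + ρ` converges to that of a geometric random variable on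
`{1,2,...}` with parameter `q = 1/(1+e^ρ)`. -/
theorem stmt8 (ε : ℝ) (hε : 0 < ε) (lam : ℝ → ℝ) (hpos : ∀ t > (0 : ℝ), 0 < lam t)
    (h0 : Filter.Tendsto lam Filter.atTop (nhds 0))
    (h1 : Filter.Tendsto (fun t => t + Real.log (lam t * ε ^ 2)) Filter.atTop Filter.atTop)
    (ρ : ℝ)
    (σ : ℝ → ℝ) (hσ : ∀ t, σ t = 1 / Real.cosh (ε * Real.sqrt (2 * lam t)))
    (s : ℝ → ℝ) (hs : ∀ t, s t = t + Real.log (lam t * ε ^ 2) + ρ)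
    (q : ℝ) (hq : q = 1 / (1 + Real.exp ρ))
    (γ : ℝ) (hγ : Real.exp γ * (1 - q) < 1) :
    Filter.Tendsto
      (fun t => (1 - σ t * (1 - Real.exp (-t))) /
        (Real.exp (-γ) * (1 - σ t * (1 - Real.exp (-t + s t)))
          - σ t * (Real.exp (s t - t) - Real.exp (-t))))
      Filter.atTop (nhds (q / (Real.exp (-γ) - (1 - q)))) ∧
    q / (Real.exp (-γ) - (1 - q))
      = ∑' n : ℕ, Real.exp (γ * (n + 1)) * q * (1 - q) ^ n := by
  have hq₁ : q ≤ 1 := by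
    rw [hq, div_le_one (by positivity)]
    linarith [exp_pos ρ]
  refine ⟨?_, (tsum_exp_mul_succ_mul_geometric hq₁ hγ).symm⟩
  have hfactor : exp (-γ) * (1 + exp ρ) - exp ρ = (1 + exp ρ) * (exp (-γ) - (1 - q)) := by
    rw [hq]
    field_simp
    ring
  have hgap : 0 < exp (-γ) - (1 - q) := sub_pos.2 (lt_exp_neg_of_exp_mul_lt_one hγ)
  have hpos' : ∀ᶠ t in atTop, 0 < lam t := (eventually_gt_atTop 0).mono hpos
  have hu_pos : ∀ᶠ t in atTop, 0 < lam t * ε ^ 2 := hpos'.mono fun t ht => by positivity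
  have hlim := tendsto_quotient_of_one_sub_div_tendsto_one (σ := σ)
    (by simpa using h0.mul_const (ε ^ 2)) (hu_pos.mono fun t ht => ht.ne')
    ((tendsto_one_sub_inv_cosh_mul_sqrt_two_mul_div hε h0 hpos').congr fun t => by rw [hσ])
    (tendsto_exp_neg_div_of_tendsto_add_log hu_pos h1) (by rw [hfactor]; positivity)
  rw [hfactor, ← div_div, ← hq] at hlim
  refine hlim.congr' ?_
  filter_upwards [hu_pos] with t ht
  have hexp : exp (s t - t) = lam t * ε ^ 2 * exp ρ := by
    rw [hs, add_sub_right_comm, add_sub_cancel_left, exp_add, exp_log ht]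
  rw [neg_add_eq_sub, hexp]
end

section
/- Let ε > 0 and let λ : (0,∞) → (0,∞) satisfy lim_{t→∞} λ(t) = 0 and lim_{t→∞} (t + ln(λ(t)ε²)) = ∞. Let ρ : (0,∞) → ℝ satisfy ρ(t) → ∞ and ln(λ(t)ε²) + ρ(t) ≤ 0 for all t. Set σ_t := 1/cosh(ε√(2λ(t))) and s(t) := t + ln(λ(t)ε²) + ρ(t). Then for every θ > 0, taking γ_t := −θ/(1 + e^{ρ(t)}), lim_{t→∞} (1 − σ_t(1−e^{−t})) / ( e^{−γ_t}(1 − σ_t(1 − e^{−t+s(t)})) − σ_t(e^{s(t)−t} − e^{−t}) ) = 1/(1+θ). -/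
open Filter Topology Real

/-!
Divide numerator and denominator by `c = λε²`. Then `(1 - σ)/c → 1` because
`1 - sech a ~ a²/2` and `a² = 2c`, the term `e^{-t}/c = e^{-(t + ln c)}` vanishes, and
`e^{ρ}(e^{-γ} - 1) → θ` since `-γ = θ/(1 + e^{ρ})`. So numerator and denominator tend to
`1` and `1 + θ`.
-/

theorem Real.tendsto_mul_exp_div_one_add_sub_one (θ : ℝ) :
    Tendsto (fun w => w * (exp (θ / (1 + w)) - 1)) atTop (𝓝 θ) := by
  have h_one_add : Tendsto (fun w : ℝ => 1 + w) atTop atTop :=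
    tendsto_atTop_add_const_left _ 1 tendsto_id
  have hx : Tendsto (fun w : ℝ => θ / (1 + w)) atTop (𝓝 0) :=
    tendsto_const_nhds.div_atTop h_one_add
  have hwx : Tendsto (fun w : ℝ => w * (θ / (1 + w))) atTop (𝓝 θ) := by
    have h := tendsto_const_nhds (x := θ) |>.sub hx
    rw [sub_zero] at h
    refine h.congr' ?_
    filter_upwards [h_one_add.eventually_ne_atTop 0] with w hw
    field_simp
    ring
  -- `exp x - 1 = x * dslope exp 0 x`, with `dslope exp 0` continuous at `0` and equal to `1` there
  have hslope : Tendsto (fun w => dslope exp 0 (θ / (1 + w))) atTop (𝓝 1) := by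
    have h := (continuousAt_dslope_same.2 (differentiableAt_exp (x := 0))).tendsto.comp hx
    rwa [dslope_same, Real.deriv_exp, exp_zero] at h
  convert hwx.mul hslope using 1
  · ext w
    have h := sub_smul_dslope exp 0 (θ / (1 + w))
    rw [sub_zero, smul_eq_mul, exp_zero] at h
    rw [mul_assoc, h]
  · rw [mul_one]

theorem Real.tendsto_one_sub_inv_cosh_sqrt_two_mul_div_s9 :
    Tendsto (fun c => (1 - (cosh √(2 * c))⁻¹) / c) (𝓝[>] 0) (𝓝 1) := by
  set d := dslope sinh 0
  have hsqrt : Tendsto (fun c : ℝ => √(2 * c)) (𝓝 0) (𝓝 0) :=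
    (continuous_const.mul continuous_id).sqrt.tendsto' _ _ (by simp)
  have hd : Tendsto (fun c => d √(2 * c)) (𝓝 0) (𝓝 1) := by
    have h := (continuousAt_dslope_same.2 (differentiableAt_sinh (x := 0))).tendsto.comp hsqrt
    rwa [dslope_same, Real.deriv_sinh, cosh_zero] at h
  have hcosh : Tendsto (fun c => cosh √(2 * c)) (𝓝 0) (𝓝 1) :=
    (continuous_cosh.tendsto' 0 1 cosh_zero).comp hsqrt
  have h : Tendsto (fun c => 2 * d √(2 * c) ^ 2 / (cosh √(2 * c) * (cosh √(2 * c) + 1)))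
      (𝓝 0) (𝓝 1) := by
    convert ((hd.pow 2).const_mul 2).div (hcosh.mul (hcosh.add_const 1)) (by norm_num)
      using 2 <;> norm_num
  refine (h.mono_left nhdsWithin_le_nhds).congr' ?_
  filter_upwards [self_mem_nhdsWithin] with c (hc : 0 < c)
  set x := √(2 * c)
  have hx : x ^ 2 = 2 * c := sq_sqrt (by positivity)
  have hsinh : sinh x = x * d x := by
    simpa [smul_eq_mul] using (sub_smul_dslope sinh 0 x).symm
  -- `1 - sech x = sinh² x / (cosh x (cosh x + 1))` and `sinh² x = x² (d x)² = 2c (d x)²`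
  field_simp
  linear_combination -cosh_sq x - (sinh x + x * d x) * hsinh - d x ^ 2 * hx

theorem tendsto_laplace_ratio {α : Type*} {l : Filter α} {c σ v w : α → ℝ} {θ : ℝ}
    (hθ : 1 + θ ≠ 0) (hc : ∀ᶠ x in l, c x ≠ 0)
    (hσc : Tendsto (fun x => (1 - σ x) / c x) l (𝓝 1)) (hσ : Tendsto σ l (𝓝 1))
    (hv : Tendsto v l (𝓝 0)) (hw : Tendsto w l atTop) :
    Tendsto (fun x => (1 - σ x * (1 - c x * v x)) /
      (exp (θ / (1 + w x)) * (1 - σ x * (1 - c x * w x)) - σ x * (c x * w x - c x * v x)))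
      l (𝓝 (1 / (1 + θ))) := by
  set u := fun x => (1 - σ x) / c x
  set E := fun x => exp (θ / (1 + w x))
  have hE : Tendsto E l (𝓝 1) := by
    have hx := tendsto_const_nhds (x := θ) |>.div_atTop (tendsto_atTop_add_const_left _ 1 hw)
    exact (continuous_exp.tendsto' 0 1 exp_zero).comp hx
  have hwE : Tendsto (fun x => w x * (E x - 1)) l (𝓝 θ) :=
    (tendsto_mul_exp_div_one_add_sub_one θ).comp hw
  have hnum : Tendsto (fun x => u x + σ x * v x) l (𝓝 1) := by
    simpa using hσc.add (hσ.mul hv)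
  have hden : Tendsto (fun x => E x * u x + σ x * (w x * (E x - 1)) + σ x * v x) l
      (𝓝 (1 + θ)) := by
    simpa using ((hE.mul hσc).add (hσ.mul hwE)).add (hσ.mul hv)
  refine (hnum.div hden hθ).congr' ?_
  filter_upwards [hc] with x hcx
  have hu : 1 - σ x = c x * u x := (mul_div_cancel₀ _ hcx).symm
  clear_value u
  rw [Pi.div_apply, ← mul_div_mul_left _ _ hcx]
  congr 1
  · linear_combination -hu
  · linear_combination -E x * hu

theorem stmt9_general (ε : ℝ) (hε : 0 < ε) (lam : ℝ → ℝ) (hpos : ∀ t > (0 : ℝ), 0 < lam t)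
    (h0 : Filter.Tendsto lam Filter.atTop (nhds 0))
    (h1 : Filter.Tendsto (fun t => t + Real.log (lam t * ε ^ 2)) Filter.atTop Filter.atTop)
    (ρ : ℝ → ℝ) (hρ : Filter.Tendsto ρ Filter.atTop Filter.atTop)
    (σ : ℝ → ℝ) (hσ : ∀ t, σ t = 1 / Real.cosh (ε * Real.sqrt (2 * lam t)))
    (s : ℝ → ℝ) (hs : ∀ t, s t = t + Real.log (lam t * ε ^ 2) + ρ t)
    (θ : ℝ) (hθ : 0 < θ)
    (γ : ℝ → ℝ) (hγ : ∀ t, γ t = -θ / (1 + Real.exp (ρ t))) :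
    Filter.Tendsto
      (fun t => (1 - σ t * (1 - Real.exp (-t))) /
        (Real.exp (-γ t) * (1 - σ t * (1 - Real.exp (-t + s t)))
          - σ t * (Real.exp (s t - t) - Real.exp (-t))))
      Filter.atTop (nhds (1 / (1 + θ))) := by
  set c := fun t => lam t * ε ^ 2
  have hc_pos : ∀ᶠ t in atTop, 0 < c t :=
    (eventually_gt_atTop 0).mono fun t ht => mul_pos (hpos t ht) (by positivity)
  have hc0 : Tendsto c atTop (𝓝 0) := by simpa using h0.mul_const (ε ^ 2)
  have hσc : ∀ t, σ t = (cosh √(2 * c t))⁻¹ := fun t => by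
    rw [hσ, one_div, ← mul_assoc, sqrt_mul' _ (sq_nonneg ε), sqrt_sq hε.le, mul_comm]
  have hσ_one : Tendsto σ atTop (𝓝 1) := by
    have hcont : Continuous fun x : ℝ => (cosh √(2 * x))⁻¹ :=
      (continuous_cosh.comp (continuous_const.mul continuous_id).sqrt).inv₀
        fun x => (cosh_pos _).ne'
    exact ((hcont.tendsto' 0 1 (by simp)).comp hc0).congr fun t => (hσc t).symm
  have hv : Tendsto (fun t => exp (-(t + log (c t)))) atTop (𝓝 0) :=
    tendsto_exp_atBot.comp (tendsto_neg_atTop_atBot.comp h1)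
  have hσ_sub : Tendsto (fun t => (1 - σ t) / c t) atTop (𝓝 1) := by
    refine (tendsto_one_sub_inv_cosh_sqrt_two_mul_div_s9.comp
      (tendsto_nhdsWithin_iff.2 ⟨hc0, hc_pos⟩)).congr fun t => ?_
    rw [Function.comp_apply, hσc]
  refine (tendsto_laplace_ratio (by positivity) (hc_pos.mono fun t h => h.ne') hσ_sub hσ_one hv
    (tendsto_exp_atTop.comp hρ)).congr' ?_
  filter_upwards [hc_pos] with t ht
  have h_exp_neg : exp (-t) = c t * exp (-(t + log (c t))) := by
    rw [neg_add, exp_add, exp_neg (log _), exp_log ht]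
    field_simp
  have h_exp_s : exp (s t - t) = c t * exp (ρ t) := by
    rw [hs, show t + log (c t) + ρ t - t = log (c t) + ρ t by ring, exp_add, exp_log ht]
  rw [hγ, neg_div, neg_neg, show -t + s t = s t - t by ring, h_exp_s, h_exp_neg]
  rfl

/-- Theorem 5.2(iii): with `ρ(t) → ∞`, `ln(λ(t)ε²) + ρ(t) ≤ 0`, and `γ_t = -θ/(1+e^{ρ(t)})`,
the Laplace transform of the rescaled particle number at time `s(t) = t + ln(λ(t)ε²) + ρ(t)`
converges to `1/(1+θ)`. -/
theorem stmt9 (ε : ℝ) (hε : 0 < ε) (lam : ℝ → ℝ) (hpos : ∀ t > (0 : ℝ), 0 < lam t)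
    (h0 : Filter.Tendsto lam Filter.atTop (nhds 0))
    (h1 : Filter.Tendsto (fun t => t + Real.log (lam t * ε ^ 2)) Filter.atTop Filter.atTop)
    (ρ : ℝ → ℝ) (hρ : Filter.Tendsto ρ Filter.atTop Filter.atTop)
    (hρle : ∀ t > (0 : ℝ), Real.log (lam t * ε ^ 2) + ρ t ≤ 0)
    (σ : ℝ → ℝ) (hσ : ∀ t, σ t = 1 / Real.cosh (ε * Real.sqrt (2 * lam t)))
    (s : ℝ → ℝ) (hs : ∀ t, s t = t + Real.log (lam t * ε ^ 2) + ρ t)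
    (θ : ℝ) (hθ : 0 < θ)
    (γ : ℝ → ℝ) (hγ : ∀ t, γ t = -θ / (1 + Real.exp (ρ t))) :
    Filter.Tendsto
      (fun t => (1 - σ t * (1 - Real.exp (-t))) /
        (Real.exp (-γ t) * (1 - σ t * (1 - Real.exp (-t + s t)))
          - σ t * (Real.exp (s t - t) - Real.exp (-t))))
      Filter.atTop (nhds (1 / (1 + θ))) :=
  stmt9_general ε hε lam hpos h0 h1 ρ hρ σ hσ s hs θ hθ γ hγ
end

section
/- For every T ∈ ℝ, ∫₀^∞ ( 1 − (1 − e^{−Δ})/(e^{−Δ−T} + 1) ) dΔ = (1 + e^{T}) ln(1 + e^{−T}). Moreover, lim_{T→∞} (1 + e^{T}) ln(1 + e^{−T}) = 1 and lim_{T→−∞} (1 + e^{T}) ln(1 + e^{−T}) / (−T) = 1. -/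
/-!
Writing `a = e^{-T}`, the integrand is `(1 + a) e^{-Δ} / (1 + a e^{-Δ})`, which has the
antiderivative `-(1 + a⁻¹) log (1 + a e^{-Δ})`. As `T → ∞` the limit comes from
`x log (1 + 1/x) → 1`; as `T → -∞` from `log (1 + e^{-T}) = -T + log (1 + e^T)`.
-/

open MeasureTheory Real Filter Topology Set

lemma hasDerivAt_log_one_add_mul_exp_neg {a : ℝ} (ha : 0 ≤ a) (x : ℝ) :
    HasDerivAt (fun Δ => log (1 + a * exp (-Δ))) (-(a * exp (-x)) / (1 + a * exp (-x))) x := by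
  have hexp : HasDerivAt (fun Δ => 1 + a * exp (-Δ)) (-(a * exp (-x))) x := by
    simpa using (((hasDerivAt_neg x).exp).const_mul a).const_add 1
  exact hexp.log (by positivity)

theorem integral_Ioi_one_sub_div_mul_exp_neg_add_one {a : ℝ} (ha : 0 < a) :
    ∫ Δ in Ioi (0 : ℝ), (1 - (1 - exp (-Δ)) / (a * exp (-Δ) + 1))
      = (1 + a⁻¹) * log (1 + a) := by
  set F : ℝ → ℝ := fun Δ => -((1 + a⁻¹) * log (1 + a * exp (-Δ)))
  have hderiv : ∀ x ∈ Ici (0 : ℝ),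
      HasDerivAt F (1 - (1 - exp (-x)) / (a * exp (-x) + 1)) x := by
    intro x _
    refine ((hasDerivAt_log_one_add_mul_exp_neg ha.le x).const_mul (1 + a⁻¹)).neg.congr_deriv ?_
    have : 0 < a * exp (-x) + 1 := by positivity
    field_simp
    ring
  have hnonneg : ∀ x ∈ Ioi (0 : ℝ), 0 ≤ 1 - (1 - exp (-x)) / (a * exp (-x) + 1) := by
    intro x _
    rw [sub_nonneg, div_le_one (by positivity)]
    nlinarith [exp_pos (-x)]
  have hlim : Tendsto F atTop (𝓝 (-((1 + a⁻¹) * log (1 + a * 0)))) :=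
    (((tendsto_exp_neg_atTop_nhds_zero.const_mul a).const_add 1).log (by simp)).const_mul _ |>.neg
  rw [integral_Ioi_of_hasDerivAt_of_nonneg' hderiv hnonneg hlim]
  simp [F]

lemma log_one_add_exp_neg (x : ℝ) : log (1 + exp (-x)) = -x + log (1 + exp x) := by
  rw [← log_exp (-x), ← log_mul (exp_pos _).ne' (by positivity), mul_add, ← exp_add]
  simp [add_comm]

theorem tendsto_one_add_exp_mul_log_one_add_exp_neg_atTop :
    Tendsto (fun T => (1 + exp T) * log (1 + exp (-T))) atTop (𝓝 1) := by
  have hlog : Tendsto (fun T => log (1 + exp (-T))) atTop (𝓝 0) := by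
    simpa using (tendsto_exp_neg_atTop_nhds_zero.const_add 1).log (by simp)
  have hmul : Tendsto (fun T => exp T * log (1 + 1 / exp T)) atTop (𝓝 1) :=
    (Real.tendsto_mul_log_one_add_div_atTop 1).comp tendsto_exp_atTop
  have hsum := hlog.add hmul
  rw [zero_add] at hsum
  refine hsum.congr fun T => ?_
  rw [one_div, ← exp_neg]
  ring

theorem tendsto_one_add_exp_mul_log_one_add_exp_neg_div_neg_atBot :
    Tendsto (fun T => (1 + exp T) * log (1 + exp (-T)) / (-T)) atBot (𝓝 1) := by
  have hexp : Tendsto (fun T => 1 + exp T) atBot (𝓝 1) := by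
    simpa using tendsto_exp_atBot.const_add 1
  have hratio : Tendsto (fun T => log (1 + exp T) * (-T)⁻¹) atBot (𝓝 0) := by
    simpa using (hexp.log one_ne_zero).mul (tendsto_inv_atTop_zero.comp tendsto_neg_atBot_atTop)
  have hprod := hexp.mul (hratio.const_add 1)
  rw [add_zero, one_mul] at hprod
  refine hprod.congr' ?_
  filter_upwards [eventually_lt_atBot 0] with T hT
  rw [log_one_add_exp_neg]
  field_simp [hT.ne]
  ring

/-- The mean of the waiting-time law `q_{∞,T}(e ≤ Δ) = (1-e^{-Δ})/(e^{-Δ-T}+1)`: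
`∫₀^∞ (1 - (1-e^{-Δ})/(e^{-Δ-T}+1)) dΔ = (1+e^T) ln(1+e^{-T})`, which tends to `1` as
`T → ∞` and behaves like `-T` as `T → -∞`. -/
theorem stmt12 (T : ℝ) :
    (∫ Δ in Set.Ioi (0 : ℝ),
        (1 - (1 - Real.exp (-Δ)) / (Real.exp (-Δ - T) + 1)))
      = (1 + Real.exp T) * Real.log (1 + Real.exp (-T)) ∧
    Filter.Tendsto (fun T : ℝ => (1 + Real.exp T) * Real.log (1 + Real.exp (-T)))
      Filter.atTop (nhds 1) ∧
    Filter.Tendsto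
      (fun T : ℝ => (1 + Real.exp T) * Real.log (1 + Real.exp (-T)) / (-T))
      Filter.atBot (nhds 1) := by
  refine ⟨?_, tendsto_one_add_exp_mul_log_one_add_exp_neg_atTop,
    tendsto_one_add_exp_mul_log_one_add_exp_neg_div_neg_atBot⟩
  have hexp (Δ : ℝ) : exp (-Δ - T) = exp (-T) * exp (-Δ) := by
    rw [← exp_add]; ring_nf
  simp_rw [hexp]
  rw [integral_Ioi_one_sub_div_mul_exp_neg_add_one (exp_pos (-T)), ← exp_neg, neg_neg]
end

section
/- Let g : [0,∞) → [0,1] be continuous and non-increasing, set G(t) = ∫₀^t g(s) ds, and let ρ : ℝ → [0,1] be continuous. Let ψ and ψ₀ be bounded continuous functions on [0,∞) × ℝ with values in [0,1], continuously differentiable in t and twice continuously differentiable in x on (0,∞) × ℝ, such that ∂_t ψ = (1/2)∂_{xx} ψ + g(t) ψ(1−ψ) and ∂_t ψ₀ = (1/2)∂_{xx} ψ₀ + ψ₀(1−ψ₀) on (0,∞) × ℝ, with the same initial condition ψ(0,x) = ψ₀(0,x) = ρ(x) for all x ∈ ℝ. Then for all t ≥ 0 and x ∈ ℝ, e^{G(t)−t}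 ψ₀(t,x) ≤ ψ(t,x) ≤ ψ₀(t,x). -/
/-!
Both inequalities follow from the weak maximum principle for `∂ₜw ≥ ½ ∂ₓₓw + c w` with `c`
bounded above: take `w = ψ₀ - ψ`, `c = g (1 - ψ - ψ₀)` for the upper bound, and
`w = ψ - e^{G(t) - t} ψ₀`, `c = g - ψ₀` for the lower one, whose remainder `ψ (ψ₀ - g ψ)` is
nonnegative thanks to the upper bound. The maximum principle is proved by minimising
`e^{-κt} w + ε (1 + x²)` over a compact rectangle: at a minimum with `t > 0` the first-order
condition in `t` and the second-order condition in `x` contradict the differential inequality.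
-/

open Set Filter Topology

lemma HasDerivAt.nonpos_of_isMinOn_Icc {f : ℝ → ℝ} {f' a b : ℝ} (hba : b < a)
    (hf : HasDerivAt f f' a) (hmin : IsMinOn f (Icc b a) a) : f' ≤ 0 := by
  have hcone : b - a ∈ posTangentConeAt (Icc b a) a :=
    sub_mem_posTangentConeAt_of_segment_subset (by rw [segment_symm, segment_eq_Icc hba.le])
  have hslope := hmin.localize.hasFDerivWithinAt_nonneg hf.hasFDerivAt.hasFDerivWithinAt hcone
  simp only [ContinuousLinearMap.toSpanSingleton_apply, smul_eq_mul] at hslope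
  nlinarith

lemma IsLocalMin.nonneg_of_hasDerivAt_hasDerivAt {f f' : ℝ → ℝ} {f'' a : ℝ}
    (hmin : IsLocalMin f a) (hf : ∀ x, HasDerivAt f (f' x) x) (hf' : HasDerivAt f' f'' a) :
    0 ≤ f'' := by
  by_contra! hneg
  have hcrit : f' a = 0 := hmin.hasDerivAt_eq_zero (hf a)
  have hdecr : ∀ᶠ y in 𝓝[>] a, f' y < 0 := by
    have hslope := (hasDerivAt_iff_tendsto_slope.mp hf').mono_left (nhdsGT_le_nhdsNE a)
    filter_upwards [hslope.eventually_lt_const hneg, self_mem_nhdsWithin] with y hy hay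
    rw [slope_def_field, hcrit, sub_zero] at hy
    exact (div_neg_iff.mp hy).resolve_left (fun h => (sub_pos.mpr hay).not_gt h.2) |>.1
  obtain ⟨u, hau, hu⟩ := mem_nhdsGT_iff_exists_Ioc_subset.mp
    (hdecr.and (hmin.filter_mono nhdsWithin_le_nhds))
  obtain ⟨y, hy, hslope⟩ := exists_hasDerivAt_eq_slope f f' hau
    (HasDerivAt.continuousOn fun x _ => hf x) fun x _ => hf x
  have hmvt : f' y * (u - a) = f u - f a := by rw [hslope, div_mul_cancel₀ _ (sub_pos.mpr hau).ne']
  nlinarith [mul_neg_of_neg_of_pos (hu ⟨hy.1, hy.2.le⟩).1 (sub_pos.mpr hau), (hu ⟨hau, le_rfl⟩).2]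

structure HasParabolicDerivs (u ut ux uxx : ℝ → ℝ → ℝ) : Prop where
  hasDerivAt_t : ∀ t > 0, ∀ x, HasDerivAt (fun τ => u τ x) (ut t x) t
  hasDerivAt_x : ∀ t > 0, ∀ x, HasDerivAt (u t) (ux t x) x
  hasDerivAt_xx : ∀ t > 0, ∀ x, HasDerivAt (ux t) (uxx t x) x

namespace HasParabolicDerivs

variable {u ut ux uxx v vt vx vxx : ℝ → ℝ → ℝ}

lemma sub (hu : HasParabolicDerivs u ut ux uxx) (hv : HasParabolicDerivs v vt vx vxx) :
    HasParabolicDerivs (fun t x => u t x - v t x) (fun t x => ut t x - vt t x)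
      (fun t x => ux t x - vx t x) (fun t x => uxx t x - vxx t x) where
  hasDerivAt_t t ht x := (hu.hasDerivAt_t t ht x).sub (hv.hasDerivAt_t t ht x)
  hasDerivAt_x t ht x := (hu.hasDerivAt_x t ht x).sub (hv.hasDerivAt_x t ht x)
  hasDerivAt_xx t ht x := (hu.hasDerivAt_xx t ht x).sub (hv.hasDerivAt_xx t ht x)

lemma mul_left {a a' : ℝ → ℝ} (ha : ∀ t > 0, HasDerivAt a (a' t) t)
    (hu : HasParabolicDerivs u ut ux uxx) :
    HasParabolicDerivs (fun t x => a t * u t x) (fun t x => a' t * u t x + a t * ut t x)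
      (fun t x => a t * ux t x) (fun t x => a t * uxx t x) where
  hasDerivAt_t t ht x := (ha t ht).mul (hu.hasDerivAt_t t ht x)
  hasDerivAt_x t ht x := (hu.hasDerivAt_x t ht x).const_mul (a t)
  hasDerivAt_xx t ht x := (hu.hasDerivAt_xx t ht x).const_mul (a t)

end HasParabolicDerivs

/-- The factor `e^{-κt}` absorbs a zeroth-order coefficient `c ≤ κ - 1`, and `ε (1 + x²)` makes
negative values occur only on a compact set, where a minimum exists. -/
noncomputable def penalized (κ ε : ℝ) (w : ℝ → ℝ → ℝ) (t x : ℝ) : ℝ :=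
  Real.exp (-(κ * t)) * w t x + ε * (1 + x ^ 2)

section MaximumPrinciple

variable {w c wt wx wxx : ℝ → ℝ → ℝ} {κ ε M : ℝ}

lemma penalized_nonneg_of_isMinOn (hd : HasParabolicDerivs w wt wx wxx) (hε : 0 ≤ ε)
    {t₀ x₀ : ℝ} (ht₀ : 0 < t₀) (hc : c t₀ x₀ + 1 ≤ κ)
    (hsuper : 1 / 2 * wxx t₀ x₀ + c t₀ x₀ * w t₀ x₀ ≤ wt t₀ x₀)
    (hmin_t : IsMinOn (fun t => penalized κ ε w t x₀) (Icc 0 t₀) t₀)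
    (hmin_x : IsLocalMin (penalized κ ε w t₀) x₀) : 0 ≤ penalized κ ε w t₀ x₀ := by
  set E := Real.exp (-(κ * t₀))
  have hE : 0 < E := Real.exp_pos _
  have hdt : HasDerivAt (fun t => penalized κ ε w t x₀)
      (E * -κ * w t₀ x₀ + E * wt t₀ x₀) t₀ := by
    have hexp : HasDerivAt (fun t => Real.exp (-(κ * t))) (E * -κ) t₀ := by
      simpa using ((hasDerivAt_id t₀).const_mul κ).neg.exp
    exact (hexp.mul (hd.hasDerivAt_t t₀ ht₀ x₀)).add_const _
  have hdx : ∀ x, HasDerivAt (penalized κ ε w t₀) (E * wx t₀ x + ε * (2 * x)) x := fun x =>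
    ((hd.hasDerivAt_x t₀ ht₀ x).const_mul E).add
      (by simpa using ((hasDerivAt_pow 2 x).const_add 1).const_mul ε)
  have hdxx : HasDerivAt (fun x => E * wx t₀ x + ε * (2 * x)) (E * wxx t₀ x₀ + ε * 2) x₀ :=
    ((hd.hasDerivAt_xx t₀ ht₀ x₀).const_mul E).add
      (by simpa using ((hasDerivAt_id x₀).const_mul 2).const_mul ε)
  have htime : E * -κ * w t₀ x₀ + E * wt t₀ x₀ ≤ 0 := hdt.nonpos_of_isMinOn_Icc ht₀ hmin_t
  have hspace : 0 ≤ E * wxx t₀ x₀ + ε * 2 := hmin_x.nonneg_of_hasDerivAt_hasDerivAt hdx hdxx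
  have hEw : -ε ≤ (κ - c t₀ x₀) * (E * w t₀ x₀) := by
    nlinarith [mul_le_mul_of_nonneg_left hsuper hE.le]
  unfold penalized
  rcases le_or_gt 0 (E * w t₀ x₀) with hpos | hneg
  · positivity
  · nlinarith [sq_nonneg x₀, mul_le_mul_of_nonpos_right (show 1 ≤ κ - c t₀ x₀ by linarith) hneg.le]

lemma abs_lt_of_penalized_neg (hκ : 0 ≤ κ) (hε : 0 < ε) {t y : ℝ} (ht : 0 ≤ t)
    (hw : -M ≤ w t y) (hneg : penalized κ ε w t y < 0) : |y| < √((|M| + 1) / ε) := by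
  have hE : Real.exp (-(κ * t)) ≤ 1 := Real.exp_le_one_iff.mpr (by nlinarith)
  have hEw : -|M| ≤ Real.exp (-(κ * t)) * w t y := calc
    -|M| ≤ Real.exp (-(κ * t)) * -|M| := by nlinarith [abs_nonneg M]
    _ ≤ Real.exp (-(κ * t)) * w t y :=
      mul_le_mul_of_nonneg_left ((neg_le_neg (le_abs_self M)).trans hw) (Real.exp_pos _).le
  rw [Real.lt_sqrt (abs_nonneg y), sq_abs, lt_div_iff₀ hε]
  unfold penalized at hneg
  nlinarith

lemma penalized_nonneg (hd : HasParabolicDerivs w wt wx wxx)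
    (hcont : ContinuousOn (fun q : ℝ × ℝ => w q.1 q.2) (Ici 0 ×ˢ univ))
    (hbdd : ∀ t ≥ 0, ∀ x, -M ≤ w t x) (hκ : 0 ≤ κ) (hc : ∀ t > 0, ∀ x, c t x + 1 ≤ κ)
    (hsuper : ∀ t > 0, ∀ x, 1 / 2 * wxx t x + c t x * w t x ≤ wt t x)
    (hinit : ∀ x, 0 ≤ w 0 x) (hε : 0 < ε) {T : ℝ} (hT : 0 ≤ T) (X : ℝ) :
    0 ≤ penalized κ ε w T X := by
  by_contra! hneg
  set R := √((|M| + 1) / ε)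
  have hsmall : ∀ t ∈ Icc 0 T, ∀ y, penalized κ ε w t y < 0 → y ∈ Ioo (-R) R :=
    fun t ht y h => abs_lt.mp (abs_lt_of_penalized_neg hκ hε ht.1 (hbdd t ht.1 y) h)
  have hTX : (T, X) ∈ Icc 0 T ×ˢ Icc (-R) R :=
    ⟨⟨hT, le_rfl⟩, Ioo_subset_Icc_self (hsmall T ⟨hT, le_rfl⟩ X hneg)⟩
  have hpcont : ContinuousOn (fun q : ℝ × ℝ => penalized κ ε w q.1 q.2)
      (Icc 0 T ×ˢ Icc (-R) R) := by
    refine ContinuousOn.add ?_ (by fun_prop)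
    exact (by fun_prop : Continuous fun q : ℝ × ℝ => Real.exp (-(κ * q.1))).continuousOn.mul
      (hcont.mono (prod_mono Icc_subset_Ici_self (subset_univ _)))
  obtain ⟨⟨t₀, x₀⟩, ⟨ht₀, hx₀⟩, hmin⟩ :=
    (isCompact_Icc.prod isCompact_Icc).exists_isMinOn ⟨_, hTX⟩ hpcont
  simp only at ht₀ hx₀
  have hneg₀ : penalized κ ε w t₀ x₀ < 0 := (hmin hTX).trans_lt hneg
  have hpos : 0 < t₀ := by
    refine ht₀.1.lt_of_ne fun h => hneg₀.not_ge ?_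
    rw [← h, penalized]
    have := hinit x₀
    positivity
  refine hneg₀.not_ge (penalized_nonneg_of_isMinOn hd hε.le hpos (hc t₀ hpos x₀)
    (hsuper t₀ hpos x₀)
    (fun t ht => isMinOn_iff.mp hmin (t, x₀) ⟨⟨ht.1, ht.2.trans ht₀.2⟩, hx₀⟩) ?_)
  filter_upwards [isOpen_Ioo.mem_nhds (hsmall t₀ ht₀ x₀ hneg₀)] with y hy
  exact isMinOn_iff.mp hmin (t₀, y) ⟨ht₀, Ioo_subset_Icc_self hy⟩

theorem HasParabolicDerivs.nonneg_of_supersolution {K : ℝ} (hd : HasParabolicDerivs w wt wx wxx)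
    (hcont : ContinuousOn (fun q : ℝ × ℝ => w q.1 q.2) (Ici 0 ×ˢ univ))
    (hbdd : ∀ t ≥ 0, ∀ x, -M ≤ w t x) (hc : ∀ t > 0, ∀ x, c t x ≤ K)
    (hsuper : ∀ t > 0, ∀ x, 1 / 2 * wxx t x + c t x * w t x ≤ wt t x)
    (hinit : ∀ x, 0 ≤ w 0 x) : ∀ t ≥ 0, ∀ x, 0 ≤ w t x := by
  intro T hT X
  set κ := max K 0 + 1
  have hlim : Tendsto (fun ε => penalized κ ε w T X) (𝓝[>] 0) (𝓝 (penalized κ 0 w T X)) := by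
    have hcont_ε : Continuous fun ε => penalized κ ε w T X := by unfold penalized; fun_prop
    exact (hcont_ε.tendsto 0).mono_left nhdsWithin_le_nhds
  have hnonneg : 0 ≤ penalized κ 0 w T X :=
    ge_of_tendsto hlim <| eventually_mem_nhdsWithin.mono fun ε hε =>
      penalized_nonneg hd hcont hbdd (by positivity)
        (fun t ht x => by linarith [hc t ht x, le_max_left K 0]) hsuper hinit hε hT X
  simp only [penalized, zero_mul, add_zero] at hnonneg
  exact nonneg_of_mul_nonneg_right hnonneg (Real.exp_pos _)

end MaximumPrinciple

lemma hasDerivAt_primitive_of_continuousOn_Ici {g : ℝ → ℝ} (hg : ContinuousOn g (Ici 0))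
    {t : ℝ} (ht : 0 < t) : HasDerivAt (fun t => ∫ s in (0 : ℝ)..t, g s) (g t) t :=
  intervalIntegral.integral_hasDerivAt_right
    (hg.mono (uIcc_of_le ht.le ▸ Icc_subset_Ici_self)).intervalIntegrable
    (ContinuousOn.stronglyMeasurableAtFilter isOpen_Ioi (hg.mono Ioi_subset_Ici_self) t ht)
    (hg.continuousAt (Ici_mem_nhds ht))

lemma lipschitzOnWith_primitive {g : ℝ → ℝ} (hg : ContinuousOn g (Ici 0))
    (hg_le : ∀ t ≥ 0, |g t| ≤ 1) :
    LipschitzOnWith 1 (fun t => ∫ s in (0 : ℝ)..t, g s) (Ici 0) := by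
  have hint : ∀ t ∈ Ici (0 : ℝ), IntervalIntegrable g MeasureTheory.volume 0 t := fun t ht =>
    (hg.mono (uIcc_of_le (show (0 : ℝ) ≤ t from ht) ▸ Icc_subset_Ici_self)).intervalIntegrable
  refine LipschitzOnWith.of_dist_le_mul fun s hs t ht => ?_
  rw [Real.dist_eq, Real.dist_eq, NNReal.coe_one, one_mul,
    intervalIntegral.integral_interval_sub_left (hint s hs) (hint t ht)]
  have hbound : ∀ x ∈ uIoc t s, ‖g x‖ ≤ 1 := fun x hx => hg_le x ((le_min ht hs).trans hx.1.le)
  simpa [Real.norm_eq_abs] using intervalIntegral.norm_integral_le_of_norm_le_const hbound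

section FKPP

variable {g : ℝ → ℝ} {u ut ux uxx v vt vx vxx : ℝ → ℝ → ℝ}

theorem fkpp_le_fkpp_one (hg : ∀ t > 0, g t ∈ Icc 0 1)
    (hu : ∀ t ≥ 0, ∀ x, u t x ∈ Icc 0 1) (hv : ∀ t ≥ 0, ∀ x, v t x ∈ Icc 0 1)
    (hu_cont : ContinuousOn (fun q : ℝ × ℝ => u q.1 q.2) (Ici 0 ×ˢ univ))
    (hv_cont : ContinuousOn (fun q : ℝ × ℝ => v q.1 q.2) (Ici 0 ×ˢ univ))
    (hud : HasParabolicDerivs u ut ux uxx) (hvd : HasParabolicDerivs v vt vx vxx)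
    (hu_pde : ∀ t > 0, ∀ x, ut t x = 1 / 2 * uxx t x + g t * (u t x * (1 - u t x)))
    (hv_pde : ∀ t > 0, ∀ x, vt t x = 1 / 2 * vxx t x + v t x * (1 - v t x))
    (hinit : ∀ x, u 0 x ≤ v 0 x) : ∀ t ≥ 0, ∀ x, u t x ≤ v t x := by
  have hw := (hvd.sub hud).nonneg_of_supersolution (M := 1) (K := 1)
    (c := fun t x => g t * (1 - u t x - v t x)) (hv_cont.sub hu_cont)
    (fun t ht x => by linarith [(hu t ht x).2, (hv t ht x).1])
    (fun t ht x => by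
      obtain ⟨hg0, hg1⟩ := hg t ht
      nlinarith [(hu t ht.le x).1, (hv t ht.le x).1])
    (fun t ht x => by
      obtain ⟨hv0, hv1⟩ := hv t ht.le x
      -- `∂ₜ(v - u) - ½∂ₓₓ(v - u) - c (v - u) = (1 - g) v (1 - v)`
      simp only [hu_pde t ht x, hv_pde t ht x]
      nlinarith [mul_nonneg (sub_nonneg.mpr (hg t ht).2) (mul_nonneg hv0 (sub_nonneg.mpr hv1))])
    (fun x => sub_nonneg.mpr (hinit x))
  exact fun t ht x => sub_nonneg.mp (hw t ht x)

theorem exp_mul_fkpp_one_le_fkpp {G : ℝ → ℝ} (hG : ∀ t > 0, HasDerivAt G (g t) t)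
    (hG_cont : ContinuousOn G (Ici 0)) (hG_le : ∀ t ≥ 0, G t ≤ t) (hG0 : G 0 = 0)
    (hg : ∀ t > 0, g t ≤ 1)
    (hu : ∀ t ≥ 0, ∀ x, u t x ∈ Icc 0 1) (hv : ∀ t ≥ 0, ∀ x, v t x ∈ Icc 0 1)
    (hu_cont : ContinuousOn (fun q : ℝ × ℝ => u q.1 q.2) (Ici 0 ×ˢ univ))
    (hv_cont : ContinuousOn (fun q : ℝ × ℝ => v q.1 q.2) (Ici 0 ×ˢ univ))
    (hud : HasParabolicDerivs u ut ux uxx) (hvd : HasParabolicDerivs v vt vx vxx)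
    (hu_pde : ∀ t > 0, ∀ x, ut t x = 1 / 2 * uxx t x + g t * (u t x * (1 - u t x)))
    (hv_pde : ∀ t > 0, ∀ x, vt t x = 1 / 2 * vxx t x + v t x * (1 - v t x))
    (hle : ∀ t > 0, ∀ x, u t x ≤ v t x) (hinit : ∀ x, v 0 x ≤ u 0 x) :
    ∀ t ≥ 0, ∀ x, Real.exp (G t - t) * v t x ≤ u t x := by
  have hE : ∀ t > 0,
      HasDerivAt (fun t => Real.exp (G t - t)) (Real.exp (G t - t) * (g t - 1)) t :=
    fun t ht => ((hG t ht).sub (hasDerivAt_id t)).exp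
  have hE_cont : ContinuousOn (fun q : ℝ × ℝ => Real.exp (G q.1 - q.1)) (Ici 0 ×ˢ univ) :=
    ((hG_cont.comp continuousOn_fst fun q hq => hq.1).sub continuousOn_fst).rexp
  have hw := (hud.sub (hvd.mul_left hE)).nonneg_of_supersolution (M := 1) (K := 1)
    (c := fun t x => g t - v t x) (hu_cont.sub (hE_cont.mul hv_cont))
    (fun t ht x => by
      obtain ⟨hv0, hv1⟩ := hv t ht x
      have hE1 : Real.exp (G t - t) ≤ 1 := Real.exp_le_one_iff.mpr (by linarith [hG_le t ht])
      nlinarith [(hu t ht x).1, Real.exp_pos (G t - t)])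
    (fun t ht x => by linarith [hg t ht, (hv t ht.le x).1])
    (fun t ht x => by
      have hu0 := (hu t ht.le x).1
      have hgu : g t * u t x ≤ v t x := by nlinarith [hg t ht, hle t ht x]
      -- `∂ₜw - ½∂ₓₓw - c w = u (v - g u)` for `w = u - e^{G-t} v`
      simp only [hu_pde t ht x, hv_pde t ht x]
      nlinarith [mul_nonneg hu0 (sub_nonneg.mpr hgu)])
    (fun x => by simpa [hG0] using hinit x)
  exact fun t ht x => sub_nonneg.mp (hw t ht x)

end FKPP

theorem stmt14_general (g : ℝ → ℝ) (hg_cont : ContinuousOn g (Set.Ici 0))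
    (hg_mem : ∀ t ≥ (0 : ℝ), g t ∈ Set.Icc (0 : ℝ) 1)
    (G : ℝ → ℝ) (hG : ∀ t, G t = ∫ s in (0 : ℝ)..t, g s)
    (ρ : ℝ → ℝ)
    (ψ ψ₀ : ℝ → ℝ → ℝ)
    (hψ_mem : ∀ t ≥ (0 : ℝ), ∀ x, ψ t x ∈ Set.Icc (0 : ℝ) 1)
    (hψ₀_mem : ∀ t ≥ (0 : ℝ), ∀ x, ψ₀ t x ∈ Set.Icc (0 : ℝ) 1)
    (hψ_cont : ContinuousOn (fun q : ℝ × ℝ => ψ q.1 q.2) (Set.Ici 0 ×ˢ Set.univ))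
    (hψ₀_cont : ContinuousOn (fun q : ℝ × ℝ => ψ₀ q.1 q.2) (Set.Ici 0 ×ˢ Set.univ))
    (ψt ψx ψxx ψ₀t ψ₀x ψ₀xx : ℝ → ℝ → ℝ)
    (hψt : ∀ t > (0 : ℝ), ∀ x, HasDerivAt (fun τ => ψ τ x) (ψt t x) t)
    (hψx : ∀ t > (0 : ℝ), ∀ x, HasDerivAt (fun y => ψ t y) (ψx t x) x)
    (hψxx : ∀ t > (0 : ℝ), ∀ x, HasDerivAt (fun y => ψx t y) (ψxx t x) x)
    (hψ₀t : ∀ t > (0 : ℝ), ∀ x, HasDerivAt (fun τ => ψ₀ τ x) (ψ₀t t x) t)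
    (hψ₀x : ∀ t > (0 : ℝ), ∀ x, HasDerivAt (fun y => ψ₀ t y) (ψ₀x t x) x)
    (hψ₀xx : ∀ t > (0 : ℝ), ∀ x, HasDerivAt (fun y => ψ₀x t y) (ψ₀xx t x) x)
    (hpde : ∀ t > (0 : ℝ), ∀ x,
      ψt t x = (1 / 2) * ψxx t x + g t * (ψ t x * (1 - ψ t x)))
    (hpde₀ : ∀ t > (0 : ℝ), ∀ x,
      ψ₀t t x = (1 / 2) * ψ₀xx t x + ψ₀ t x * (1 - ψ₀ t x))
    (hinit : ∀ x, ψ 0 x = ρ x ∧ ψ₀ 0 x = ρ x) :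
    ∀ t ≥ (0 : ℝ), ∀ x,
      Real.exp (G t - t) * ψ₀ t x ≤ ψ t x ∧ ψ t x ≤ ψ₀ t x := by
  obtain rfl : G = fun t => ∫ s in (0 : ℝ)..t, g s := funext hG
  have hd : HasParabolicDerivs ψ ψt ψx ψxx := ⟨hψt, hψx, hψxx⟩
  have hd₀ : HasParabolicDerivs ψ₀ ψ₀t ψ₀x ψ₀xx := ⟨hψ₀t, hψ₀x, hψ₀xx⟩
  have hinit_eq : ∀ x, ψ 0 x = ψ₀ 0 x := fun x => (hinit x).1.trans (hinit x).2.symm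
  have hle := fkpp_le_fkpp_one (fun t ht => hg_mem t ht.le) hψ_mem hψ₀_mem hψ_cont hψ₀_cont
    hd hd₀ hpde hpde₀ fun x => (hinit_eq x).le
  have hLip := lipschitzOnWith_primitive hg_cont fun t ht =>
    abs_le.mpr ⟨by linarith [(hg_mem t ht).1], (hg_mem t ht).2⟩
  have hG_le : ∀ t ≥ 0, ∫ s in (0 : ℝ)..t, g s ≤ t := fun t ht => by
    simpa [Real.dist_eq, abs_of_nonneg ht] using
      (le_abs_self _).trans (hLip.dist_le_mul t ht 0 self_mem_Ici)
  have hge := exp_mul_fkpp_one_le_fkpp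
    (fun t ht => hasDerivAt_primitive_of_continuousOn_Ici hg_cont ht) hLip.continuousOn hG_le
    intervalIntegral.integral_same (fun t ht => (hg_mem t ht.le).2)
    hψ_mem hψ₀_mem hψ_cont hψ₀_cont hd hd₀ hpde hpde₀ (fun t ht => hle t ht.le)
    fun x => (hinit_eq x).ge
  exact fun t ht x => ⟨hge t ht x, hle t ht x⟩

/-- Lemma 6.3: comparison of the time-dependent F-KPP equation
`∂_t ψ = ½∂_{xx}ψ + g(t)ψ(1-ψ)` (with `0 ≤ g ≤ 1` continuous non-increasing) with the
standard F-KPP equation (`g ≡ 1`) for the same initial data `ρ` taking values in `[0,1]`: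
`e^{G(t)-t} ψ₀(t,x) ≤ ψ(t,x) ≤ ψ₀(t,x)`, where `G(t) = ∫₀^t g(s) ds`. -/
theorem stmt14 (g : ℝ → ℝ) (hg_cont : ContinuousOn g (Set.Ici 0))
    (hg_mono : AntitoneOn g (Set.Ici 0))
    (hg_mem : ∀ t ≥ (0 : ℝ), g t ∈ Set.Icc (0 : ℝ) 1)
    (G : ℝ → ℝ) (hG : ∀ t, G t = ∫ s in (0 : ℝ)..t, g s)
    (ρ : ℝ → ℝ) (hρ_cont : Continuous ρ) (hρ_mem : ∀ x, ρ x ∈ Set.Icc (0 : ℝ) 1)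
    (ψ ψ₀ : ℝ → ℝ → ℝ)
    (hψ_mem : ∀ t ≥ (0 : ℝ), ∀ x, ψ t x ∈ Set.Icc (0 : ℝ) 1)
    (hψ₀_mem : ∀ t ≥ (0 : ℝ), ∀ x, ψ₀ t x ∈ Set.Icc (0 : ℝ) 1)
    (hψ_cont : ContinuousOn (fun q : ℝ × ℝ => ψ q.1 q.2) (Set.Ici 0 ×ˢ Set.univ))
    (hψ₀_cont : ContinuousOn (fun q : ℝ × ℝ => ψ₀ q.1 q.2) (Set.Ici 0 ×ˢ Set.univ))
    (ψt ψx ψxx ψ₀t ψ₀x ψ₀xx : ℝ → ℝ → ℝ)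
    (hψt : ∀ t > (0 : ℝ), ∀ x, HasDerivAt (fun τ => ψ τ x) (ψt t x) t)
    (hψx : ∀ t > (0 : ℝ), ∀ x, HasDerivAt (fun y => ψ t y) (ψx t x) x)
    (hψxx : ∀ t > (0 : ℝ), ∀ x, HasDerivAt (fun y => ψx t y) (ψxx t x) x)
    (hψ₀t : ∀ t > (0 : ℝ), ∀ x, HasDerivAt (fun τ => ψ₀ τ x) (ψ₀t t x) t)
    (hψ₀x : ∀ t > (0 : ℝ), ∀ x, HasDerivAt (fun y => ψ₀ t y) (ψ₀x t x) x)
    (hψ₀xx : ∀ t > (0 : ℝ), ∀ x, HasDerivAt (fun y => ψ₀x t y) (ψ₀xx t x) x)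
    (hψt_cont : ContinuousOn (fun q : ℝ × ℝ => ψt q.1 q.2) (Set.Ioi 0 ×ˢ Set.univ))
    (hψxx_cont : ContinuousOn (fun q : ℝ × ℝ => ψxx q.1 q.2) (Set.Ioi 0 ×ˢ Set.univ))
    (hψ₀t_cont : ContinuousOn (fun q : ℝ × ℝ => ψ₀t q.1 q.2) (Set.Ioi 0 ×ˢ Set.univ))
    (hψ₀xx_cont : ContinuousOn (fun q : ℝ × ℝ => ψ₀xx q.1 q.2) (Set.Ioi 0 ×ˢ Set.univ))
    (hpde : ∀ t > (0 : ℝ), ∀ x,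
      ψt t x = (1 / 2) * ψxx t x + g t * (ψ t x * (1 - ψ t x)))
    (hpde₀ : ∀ t > (0 : ℝ), ∀ x,
      ψ₀t t x = (1 / 2) * ψ₀xx t x + ψ₀ t x * (1 - ψ₀ t x))
    (hinit : ∀ x, ψ 0 x = ρ x ∧ ψ₀ 0 x = ρ x) :
    ∀ t ≥ (0 : ℝ), ∀ x,
      Real.exp (G t - t) * ψ₀ t x ≤ ψ t x ∧ ψ t x ≤ ψ₀ t x :=
  stmt14_general g hg_cont hg_mem G hG ρ ψ ψ₀ hψ_mem hψ₀_mem hψ_cont hψ₀_cont ψt ψx ψxx ψ₀t ψ₀x ψ₀xx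
    hψt hψx hψxx hψ₀t hψ₀x hψ₀xx hpde hpde₀ hinit
end

section
/- Let p₀, p₂ ∈ (0,1) with p₀ + p₂ = 1, let σ ∈ (0,1), set D := 1 − 4σp₂p₀ and v⁻ := (1 − √D)/(2σp₂), and let v(t) = v⁻ + e^{−√D t}/( 1/(1−v⁻) − (σp₂/√D)(1 − e^{−√D t}) ) be the solution of v' = σp₂v² − v + p₀ with v(0) = 1. Define N(t) := (1/v(t)) · e^{−√D t} / ( 1 − (σp₂(1−v⁻)/√D)(1 − e^{−√D t}) )². Then 0 < σp₂(1−v⁻)/√D < 1 and lim_{t→∞} e^{√D t} N(t) = (1/v⁻) · (1 − σp₂(1−v⁻)/√D)^{−2}; in particular N(t) → 0 exponentially fast as t → ∞. -/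
/-! Write `s = √D` and `a = σp₂`, so that `v⁻ = (1 - s)/(2a)` and `c = a(1 - v⁻)/s = (2a - 1 + s)/(2s)`.
Since `p₀ = 1 - p₂`, one has `D - (1 - 2a)² = 4σp₂²(1 - σ) > 0`, i.e. `|1 - 2a| < s`, and `s < 1`;
these two inequalities place both `v⁻` and `c` in `(0, 1)`. In `e^{√D t} N(t)` the exponential factors
cancel, leaving a continuous function of `e^{-√D t} → 0`, whose value at `0` is the claimed limit. -/

open Filter Topology Real

section Parameters

variable {σ p₀ p₂ : ℝ}

theorem sq_one_sub_two_mul_lt_discriminant (hσ₀ : 0 < σ) (hσ₁ : σ < 1) (hp₂ : 0 < p₂)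
    (hsum : p₀ + p₂ = 1) : (1 - 2 * σ * p₂) ^ 2 < 1 - 4 * σ * p₂ * p₀ := by
  have hdiff : 1 - 4 * σ * p₂ * p₀ - (1 - 2 * σ * p₂) ^ 2 = 4 * σ * p₂ ^ 2 * (1 - σ) := by
    rw [show p₀ = 1 - p₂ by linarith]; ring
  have : 0 < 4 * σ * p₂ ^ 2 * (1 - σ) := by have := sub_pos.2 hσ₁; positivity
  linarith

theorem abs_one_sub_two_mul_lt_sqrt_discriminant (hσ₀ : 0 < σ) (hσ₁ : σ < 1) (hp₂ : 0 < p₂)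
    (hsum : p₀ + p₂ = 1) : |1 - 2 * σ * p₂| < √(1 - 4 * σ * p₂ * p₀) :=
  lt_sqrt_of_sq_lt <| by rw [sq_abs]; exact sq_one_sub_two_mul_lt_discriminant hσ₀ hσ₁ hp₂ hsum

theorem sqrt_discriminant_lt_one (hσ₀ : 0 < σ) (hp₀ : 0 < p₀) (hp₂ : 0 < p₂) :
    √(1 - 4 * σ * p₂ * p₀) < 1 :=
  (sqrt_lt' one_pos).2 <| by nlinarith [mul_pos (mul_pos hσ₀ hp₂) hp₀]

end Parameters

section Roots

variable {a s : ℝ}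

theorem small_root_mem_Ioo (ha : 0 < a) (hs₁ : s < 1) (hs : |1 - 2 * a| < s) :
    (1 - s) / (2 * a) ∈ Set.Ioo 0 1 := by
  have := (abs_lt.1 hs).2
  constructor
  · exact div_pos (by linarith) (by positivity)
  · rw [div_lt_one (by positivity)]; linarith

theorem mul_one_sub_small_root_div_mem_Ioo (ha : 0 < a) (hs : |1 - 2 * a| < s) :
    a * (1 - (1 - s) / (2 * a)) / s ∈ Set.Ioo 0 1 := by
  obtain ⟨h₁, h₂⟩ := abs_lt.1 hs
  have hs₀ : 0 < s := (abs_nonneg _).trans_lt hs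
  have hnum : a * (1 - (1 - s) / (2 * a)) = (2 * a - 1 + s) / 2 := by field_simp; ring
  rw [hnum]
  constructor
  · exact div_pos (by linarith) hs₀
  · rw [div_lt_one hs₀]; linarith

end Roots

section ExponentialDecay

variable {s : ℝ}

theorem tendsto_exp_neg_mul_atTop (hs : 0 < s) :
    Tendsto (fun t => exp (-s * t)) atTop (𝓝 0) :=
  tendsto_exp_comp_nhds_zero.2 <|
    (tendsto_neg_atTop_atBot.comp (tendsto_id.const_mul_atTop hs)).congr fun t => by simp

theorem tendsto_comp_exp_neg_mul_atTop (hs : 0 < s) {g : ℝ → ℝ} (hg : ContinuousAt g 0) :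
    Tendsto (fun t => g (exp (-s * t))) atTop (𝓝 (g 0)) :=
  hg.tendsto.comp (tendsto_exp_neg_mul_atTop hs)

theorem tendsto_add_exp_neg_mul_div (hs : 0 < s) {w A B : ℝ} (hAB : A ≠ B) :
    Tendsto (fun t => w + exp (-s * t) / (A - B * (1 - exp (-s * t)))) atTop (𝓝 w) := by
  have hden : A - B * (1 - 0) ≠ 0 := by simpa [sub_eq_zero] using hAB
  simpa using tendsto_comp_exp_neg_mul_atTop hs
    (g := fun x => w + x / (A - B * (1 - x))) (by fun_prop (disch := exact hden))

theorem tendsto_one_div_mul_inv_sq (hs : 0 < s) {v : ℝ → ℝ} {w c : ℝ}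
    (hv : Tendsto v atTop (𝓝 w)) (hw : w ≠ 0) (hc : c ≠ 1) :
    Tendsto (fun t => 1 / v t * ((1 - c * (1 - exp (-s * t))) ^ 2)⁻¹) atTop
      (𝓝 (1 / w * ((1 - c) ^ 2)⁻¹)) := by
  have hden : (1 - c * (1 - 0)) ^ 2 ≠ 0 := by simpa [sub_eq_zero] using hc.symm
  have hq := tendsto_comp_exp_neg_mul_atTop hs
    (g := fun x => ((1 - c * (1 - x)) ^ 2)⁻¹) (by fun_prop (disch := exact hden))
  simpa using (hv.inv₀ hw).mul hq

theorem tendsto_zero_of_tendsto_exp_mul (hs : 0 < s) {f : ℝ → ℝ} {L : ℝ}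
    (hf : Tendsto (fun t => exp (s * t) * f t) atTop (𝓝 L)) : Tendsto f atTop (𝓝 0) := by
  simpa [← mul_assoc, ← exp_add] using (tendsto_exp_neg_mul_atTop hs).mul hf

end ExponentialDecay

/-- Section 8: with `c = σp₂(1-v⁻)/√D ∈ (0,1)`, the expected particle number
`N(t) = (1/v(t)) e^{-√D t}/(1 - c(1-e^{-√D t}))²` satisfies
`e^{√D t} N(t) → (1/v⁻)(1-c)⁻²`; in particular `N(t) → 0` exponentially fast. -/
theorem stmt19 (p₀ p₂ σ : ℝ) (hp₀ : p₀ ∈ Set.Ioo (0 : ℝ) 1) (hp₂ : p₂ ∈ Set.Ioo (0 : ℝ) 1)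
    (hsum : p₀ + p₂ = 1) (hσ : σ ∈ Set.Ioo (0 : ℝ) 1)
    (D : ℝ) (hD : D = 1 - 4 * σ * p₂ * p₀)
    (vm : ℝ) (hvm : vm = (1 - Real.sqrt D) / (2 * σ * p₂))
    (v : ℝ → ℝ)
    (hv : ∀ t, v t = vm + Real.exp (-Real.sqrt D * t) /
      (1 / (1 - vm) - (σ * p₂ / Real.sqrt D) * (1 - Real.exp (-Real.sqrt D * t))))
    (c : ℝ) (hc : c = σ * p₂ * (1 - vm) / Real.sqrt D)
    (N : ℝ → ℝ)
    (hN : ∀ t, N t = (1 / v t) * Real.exp (-Real.sqrt D * t) /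
      (1 - c * (1 - Real.exp (-Real.sqrt D * t))) ^ 2) :
    0 < c ∧ c < 1 ∧
    Filter.Tendsto (fun t => Real.exp (Real.sqrt D * t) * N t) Filter.atTop
      (nhds ((1 / vm) * ((1 - c) ^ 2)⁻¹)) ∧
    Filter.Tendsto N Filter.atTop (nhds 0) := by
  have ha : 0 < σ * p₂ := mul_pos hσ.1 hp₂.1
  have hs : |1 - 2 * (σ * p₂)| < √D := by
    simpa [hD, mul_assoc] using abs_one_sub_two_mul_lt_sqrt_discriminant hσ.1 hσ.2 hp₂.1 hsum
  have hs₀ : 0 < √D := (abs_nonneg _).trans_lt hs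
  have hs₁ : √D < 1 := hD ▸ sqrt_discriminant_lt_one hσ.1 hp₀.1 hp₂.1
  obtain ⟨hvm₀, hvm₁⟩ : vm ∈ Set.Ioo 0 1 := by
    simpa [hvm, mul_assoc] using small_root_mem_Ioo ha hs₁ hs
  obtain ⟨hc₀, hc₁⟩ : c ∈ Set.Ioo 0 1 := by
    simpa [hc, hvm, mul_assoc] using mul_one_sub_small_root_div_mem_Ioo ha hs
  have hAB : 1 / (1 - vm) ≠ σ * p₂ / √D := by
    rw [hc, div_lt_one hs₀] at hc₁
    refine ne_of_gt ((div_lt_div_iff₀ hs₀ (sub_pos.2 hvm₁)).2 ?_)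
    linarith
  have hv_lim : Tendsto v atTop (𝓝 vm) :=
    (tendsto_add_exp_neg_mul_div hs₀ hAB).congr fun t => (hv t).symm
  have hlim : Tendsto (fun t => exp (√D * t) * N t) atTop (𝓝 (1 / vm * ((1 - c) ^ 2)⁻¹)) := by
    refine (tendsto_one_div_mul_inv_sq hs₀ hv_lim hvm₀.ne' hc₁.ne).congr fun t => ?_
    rw [hN, mul_div_assoc, mul_left_comm, ← mul_div_assoc (exp _), ← exp_add, neg_mul,
      add_neg_cancel, exp_zero, one_div (_ ^ 2)]
  exact ⟨hc₀, hc₁, hlim, tendsto_zero_of_tendsto_exp_mul hs₀ hlim⟩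
end
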